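/- arXiv:0906.1633 — 7 statements merged into one kernel-verified Lean document; each statement's English description precedes it below -/
import Mathlib

section
/- The space AC(X,E) equipped with the norm ‖f‖_AC = ‖f‖_∞ + V(f;X) is a Banach space, i.e., it is complete. -/
open Set

def AbsCont {E : Type*} [NormedAddCommGroup E] {X : Set ℝ} (f : X → E) : Prop :=
  ∀ ε > (0 : ℝ), ∃ δ > (0 : ℝ), ∀ n : ℕ, ∀ a b : Fin n → X,
    (∀ i, (a i : ℝ) < b i) →
    (∀ i j, i ≠ j → Disjoint (Set.Ioo (a i : ℝ) (b i)) (Set.Ioo (a j : ℝ) (b j))) →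
    (∑ i, ((b i : ℝ) - a i)) < δ →
    (∑ i, ‖f (b i) - f (a i)‖) < ε

def PartSums {E : Type*} [NormedAddCommGroup E] {X : Set ℝ} (f : X → E) : Set ℝ :=
  {s | ∃ n : ℕ, ∃ x : Fin (n + 1) → X, StrictMono (fun i => (x i : ℝ)) ∧
    s = ∑ i : Fin n, ‖f (x i.succ) - f (x i.castSucc)‖}

noncomputable def var {E : Type*} [NormedAddCommGroup E] {X : Set ℝ} (f : X → E) : ℝ :=
  sSup (PartSums f)

/-- The supremum norm of `f` on `X`. -/
noncomputable def supNorm {E : Type*} [NormedAddCommGroup E] {X : Set ℝ} (f : X → E) : ℝ :=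
  sSup {r | ∃ x : X, r = ‖f x‖}

/-- The AC norm `‖f‖_AC = ‖f‖_∞ + V(f;X)`. -/
noncomputable def ACnorm {E : Type*} [NormedAddCommGroup E] {X : Set ℝ} (f : X → E) : ℝ :=
  supNorm f + var f

/-!
The AC norm dominates the sup norm and every partition sum, so an AC-Cauchy sequence `f n`
converges pointwise to some `g`. Partition sums pass to pointwise limits, hence
`‖f n - g‖_AC → 0`. Sums over disjoint families of intervals are bounded by the variation, so `g`
is a perturbation of small variation of the absolutely continuous `f N`, which makes `g`
absolutely continuous.

All of this needs the finiteness of the variation of an absolutely continuous function on a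
compact set: cut the range of a chain into windows of length `h < δ`; the steps inside one window
contribute less than `1`, and the steps crossing from one window to the next are at most
`diam X / h` in number, each contributing at most `2 sup ‖f‖`.
-/

open Filter Topology

theorem Finset.sum_edist_eq_ofReal_sum_norm_sub {ι E : Type*} [NormedAddCommGroup E]
    (s : Finset ι) (x y : ι → E) :
    ∑ i ∈ s, edist (x i) (y i) = ENNReal.ofReal (∑ i ∈ s, ‖x i - y i‖) := by
  rw [ENNReal.ofReal_sum_of_nonneg fun _ _ => norm_nonneg _]
  simp only [edist_dist, dist_eq_norm]

theorem Monotone.sum_sub_le_of_mem_Icc {v : ℕ → ℝ} (hv : Monotone v) {s : Finset ℕ} {a b : ℝ}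
    (hab : a ≤ b) (hs : ∀ i ∈ s, a ≤ v i ∧ v (i + 1) ≤ b) :
    ∑ i ∈ s, (v (i + 1) - v i) ≤ b - a := by
  -- clamping `v` to `[a, b]` embeds the sum into a telescoping one
  set w : ℕ → ℝ := fun i => max a (min (v i) b)
  have hw : Monotone w := fun i j hij => max_le_max le_rfl (min_le_min_right b (hv hij))
  obtain ⟨N, hN⟩ := s.exists_nat_subset_range
  calc ∑ i ∈ s, (v (i + 1) - v i) = ∑ i ∈ s, (w (i + 1) - w i) := by
        refine Finset.sum_congr rfl fun i hi => ?_
        obtain ⟨h1, h2⟩ := hs i hi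
        have h3 := hv (Nat.le_succ i)
        simp only [w, min_eq_left h2, min_eq_left (h3.trans h2), max_eq_right (h1.trans h3),
          max_eq_right h1]
    _ ≤ ∑ i ∈ Finset.range N, (w (i + 1) - w i) :=
        Finset.sum_le_sum_of_subset_of_nonneg hN fun i _ _ => sub_nonneg.2 (hw (Nat.le_succ i))
    _ = w N - w 0 := Finset.sum_range_sub w N
    _ ≤ b - a := sub_le_sub (max_le hab (min_le_right _ _)) (le_max_left _ _)

theorem Monotone.card_filter_lt_succ_add_le {p : ℕ → ℕ} (hp : Monotone p) (n : ℕ) :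
    ((Finset.range n).filter fun i => p i < p (i + 1)).card + p 0 ≤ p n := by
  induction n with
  | zero => simp
  | succ n ih =>
    rw [Finset.range_add_one, Finset.filter_insert]
    split_ifs
    · rw [Finset.card_insert_of_notMem (by simp)]
      omega
    · have := hp (Nat.le_add_right n 1)
      omega

section

variable {E : Type*} [NormedAddCommGroup E] {X : Set ℝ} {f g : X → E}

theorem AbsCont.sub (hf : AbsCont f) (hg : AbsCont g) : AbsCont fun x => f x - g x := by
  intro ε hε
  obtain ⟨δ₁, hδ₁, H₁⟩ := hf (ε / 2) (half_pos hε)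
  obtain ⟨δ₂, hδ₂, H₂⟩ := hg (ε / 2) (half_pos hε)
  refine ⟨min δ₁ δ₂, lt_min hδ₁ hδ₂, fun n a b hab hd hlen => ?_⟩
  have h₁ := H₁ n a b hab hd (hlen.trans_le (min_le_left _ _))
  have h₂ := H₂ n a b hab hd (hlen.trans_le (min_le_right _ _))
  calc ∑ i, ‖f (b i) - g (b i) - (f (a i) - g (a i))‖
      ≤ ∑ i, (‖f (b i) - f (a i)‖ + ‖g (b i) - g (a i)‖) := Finset.sum_le_sum fun i _ => by
        rw [sub_sub_sub_comm]
        exact norm_sub_le _ _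
    _ = ∑ i, ‖f (b i) - f (a i)‖ + ∑ i, ‖g (b i) - g (a i)‖ := Finset.sum_add_distrib
    _ < ε := by linarith

theorem AbsCont.exists_finset_sum_lt {ι : Type*} (hf : AbsCont f) {ε : ℝ} (hε : 0 < ε) :
    ∃ δ > 0, ∀ (s : Finset ι) (a b : ι → X), (∀ i ∈ s, (a i : ℝ) < b i) →
      (s : Set ι).PairwiseDisjoint (fun i => Ioo (a i : ℝ) (b i)) →
      ∑ i ∈ s, ((b i : ℝ) - a i) < δ → ∑ i ∈ s, ‖f (b i) - f (a i)‖ < ε := by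
  obtain ⟨δ, hδ, H⟩ := hf ε hε
  refine ⟨δ, hδ, fun s a b hab hd hlen => ?_⟩
  have reindex (F : ι → ℝ) : ∑ k, F (s.equivFin.symm k) = ∑ i ∈ s, F i := by
    rw [Equiv.sum_comp s.equivFin.symm (fun i : s => F i), Finset.sum_coe_sort]
  rw [← reindex fun i => ‖f (b i) - f (a i)‖]
  refine H _ (fun k => a (s.equivFin.symm k)) (fun k => b (s.equivFin.symm k))
    (fun k => hab _ (s.equivFin.symm k).2)
    (fun k l hkl => hd (s.equivFin.symm k).2 (s.equivFin.symm l).2 fun h => ?_)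
    (by rwa [reindex fun i => (b i : ℝ) - a i])
  exact hkl (s.equivFin.symm.injective (Subtype.ext h))

theorem AbsCont.uniformContinuous (hf : AbsCont f) : UniformContinuous f := by
  rw [Metric.uniformContinuous_iff]
  intro ε hε
  obtain ⟨δ, hδ, H⟩ := hf ε hε
  have step {x y : X} (hxy : (x : ℝ) < y) (hδxy : (y : ℝ) - x < δ) : ‖f y - f x‖ < ε := by
    simpa using H 1 (fun _ => x) (fun _ => y) (fun _ => hxy)
      (fun i j hij => absurd (Subsingleton.elim i j) hij) (by simpa using hδxy)
  refine ⟨δ, hδ, fun {x y} hxy => ?_⟩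
  rw [Subtype.dist_eq, Real.dist_eq] at hxy
  rw [dist_eq_norm]
  rcases lt_trichotomy (x : ℝ) y with h | h | h
  · rw [norm_sub_rev]
    exact step h (by rwa [abs_sub_comm, abs_of_pos (sub_pos.2 h)] at hxy)
  · simp [Subtype.ext h, hε]
  · exact step h (by rwa [abs_of_pos (sub_pos.2 h)] at hxy)

theorem AbsCont.exists_norm_le (hX : IsCompact X) (hf : AbsCont f) : ∃ M, ∀ x, ‖f x‖ ≤ M := by
  have : CompactSpace X := isCompact_iff_compactSpace.mp hX
  obtain ⟨M, hM⟩ := (isCompact_range hf.uniformContinuous.continuous).isBounded.exists_norm_le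
  exact ⟨M, fun x => hM _ (mem_range_self x)⟩

theorem AbsCont.exists_sum_lt_of_window (hf : AbsCont f) {ε : ℝ} (hε : 0 < ε) :
    ∃ δ > 0, ∀ u : ℕ → X, Monotone u → ∀ (s : Finset ℕ) (a b : ℝ), a ≤ b → b - a < δ →
      (∀ i ∈ s, a ≤ u i ∧ (u (i + 1) : ℝ) ≤ b) → ∑ i ∈ s, ‖f (u (i + 1)) - f (u i)‖ < ε := by
  obtain ⟨δ, hδ, H⟩ := hf.exists_finset_sum_lt (ι := ℕ) hε
  refine ⟨δ, hδ, fun u hu s a b hab hlen hs => ?_⟩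
  have hv : Monotone fun i => (u i : ℝ) := fun i j hij => hu hij
  rw [← Finset.sum_filter_of_ne (p := fun i => (u i : ℝ) < u (i + 1))]
  · refine H _ u (fun i => u (i + 1)) (fun i hi => (Finset.mem_filter.1 hi).2) ?_ ?_
    · exact hv.pairwise_disjoint_on_Ioo_succ.set_pairwise _
    · calc _ ≤ b - a := hv.sum_sub_le_of_mem_Icc hab fun i hi => hs i (Finset.mem_filter.1 hi).1
        _ < δ := hlen
  · intro i _ hi
    refine lt_of_le_of_ne (hv (Nat.le_succ i)) fun h => hi ?_
    rw [Subtype.ext h, sub_self, norm_zero]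

theorem sum_range_norm_sub_le_of_window {u : ℕ → X} (hu : Monotone u) {c h M : ℝ} (hh : 0 < h)
    (hc : ∀ i, c ≤ u i) (hM : ∀ x, ‖f x‖ ≤ M)
    (hwin : ∀ (s : Finset ℕ) (a : ℝ), (∀ i ∈ s, a ≤ u i ∧ (u (i + 1) : ℝ) ≤ a + h) →
      ∑ i ∈ s, ‖f (u (i + 1)) - f (u i)‖ ≤ 1) (n : ℕ) :
    ∑ i ∈ Finset.range n, ‖f (u (i + 1)) - f (u i)‖ ≤
      (1 + 2 * M) * (⌊((u n : ℝ) - c) / h⌋₊ + 1) := by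
  -- `u i` lies in the window `[c + p i * h, c + (p i + 1) * h)`
  set p : ℕ → ℕ := fun i => ⌊((u i : ℝ) - c) / h⌋₊
  have hp : Monotone p := fun i j hij => Nat.floor_mono
    (div_le_div_of_nonneg_right (sub_le_sub_right (Subtype.coe_le_coe.2 (hu hij)) c) hh.le)
  have hM0 : 0 ≤ M := (norm_nonneg _).trans (hM (u 0))
  have hcrossing : ∑ i ∈ Finset.range n with p i < p (i + 1), ‖f (u (i + 1)) - f (u i)‖ ≤
      p n * (2 * M) := by
    calc _ ≤ ∑ i ∈ Finset.range n with p i < p (i + 1), 2 * M := Finset.sum_le_sum fun i _ =>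
          (norm_sub_le_of_le (hM _) (hM _)).trans_eq (two_mul M).symm
      _ = ((Finset.range n).filter fun i => p i < p (i + 1)).card * (2 * M) := by
          rw [Finset.sum_const, nsmul_eq_mul]
      _ ≤ p n * (2 * M) := by
          gcongr
          exact_mod_cast le_of_add_le_left (hp.card_filter_lt_succ_add_le n)
  have hinside : ∑ i ∈ Finset.range n with ¬ p i < p (i + 1), ‖f (u (i + 1)) - f (u i)‖ ≤
      p n + 1 := by
    rw [← Finset.sum_fiberwise_of_maps_to (t := Finset.range (p n + 1)) (g := p) fun i hi => by
      simp only [Finset.mem_filter, Finset.mem_range] at hi ⊢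
      exact Nat.lt_succ_of_le (hp hi.1.le)]
    calc _ ≤ ∑ j ∈ Finset.range (p n + 1), (1 : ℝ) :=
          Finset.sum_le_sum fun j _ => hwin _ (c + j * h) fun i hi => ?_
      _ = p n + 1 := by simp
    simp only [Finset.mem_filter, Finset.mem_range, not_lt] at hi
    obtain ⟨⟨-, hle⟩, rfl⟩ := hi
    have heq : p (i + 1) = p i := le_antisymm hle (hp (Nat.le_add_right i 1))
    have hlow : (p i : ℝ) ≤ ((u i : ℝ) - c) / h :=
      Nat.floor_le (div_nonneg (sub_nonneg.2 (hc i)) hh.le)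
    have hup : ((u (i + 1) : ℝ) - c) / h < p (i + 1) + 1 := Nat.lt_floor_add_one _
    rw [le_div_iff₀ hh] at hlow
    rw [heq, div_lt_iff₀ hh] at hup
    constructor <;> nlinarith
  rw [← Finset.sum_filter_add_sum_filter_not (Finset.range n) fun i => p i < p (i + 1)]
  nlinarith

theorem AbsCont.boundedVariationOn (hX : IsCompact X) (hf : AbsCont f) :
    BoundedVariationOn f univ := by
  obtain ⟨δ, hδ, hwin⟩ := hf.exists_sum_lt_of_window one_pos
  obtain ⟨M, hM⟩ := hf.exists_norm_le hX
  obtain ⟨c, hc⟩ := hX.bddBelow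
  obtain ⟨d, hd⟩ := hX.bddAbove
  have hh : 0 < δ / 2 := half_pos hδ
  refine ne_top_of_le_ne_top
    (ENNReal.ofReal_ne_top (r := (1 + 2 * M) * (⌊(d - c) / (δ / 2)⌋₊ + 1)))
    (iSup_le fun ⟨n, u, hu, _⟩ => ?_)
  rw [Finset.sum_edist_eq_ofReal_sum_norm_sub]
  refine ENNReal.ofReal_le_ofReal ((sum_range_norm_sub_le_of_window hu hh (fun i => hc (u i).2) hM
    (fun s a hs => (hwin u hu s a (a + δ / 2) (by linarith) (by linarith) hs).le) n).trans ?_)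
  have hM0 : 0 ≤ M := (norm_nonneg _).trans (hM (u 0))
  gcongr
  exact hd (u n).2

theorem ofReal_le_eVariationOn_of_mem_partSums {s : ℝ} (hs : s ∈ PartSums f) :
    ENNReal.ofReal s ≤ eVariationOn f univ := by
  obtain ⟨n, x, hx, rfl⟩ := hs
  have hu : Monotone fun i => x (Fin.clamp i n) := fun i j hij =>
    Subtype.coe_le_coe.1 (hx.monotone (Fin.le_def.2 (by simp [Fin.clamp]; omega)))
  calc ENNReal.ofReal _ = ∑ i ∈ Finset.range n,
        edist (f (x (Fin.clamp (i + 1) n))) (f (x (Fin.clamp i n))) := by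
        rw [Finset.sum_edist_eq_ofReal_sum_norm_sub, ← Fin.sum_univ_eq_sum_range
          (fun i => ‖f (x (Fin.clamp (i + 1) n)) - f (x (Fin.clamp i n))‖)]
        congr! 5 <;> congr 1 <;> ext <;> simp [Fin.clamp]
    _ ≤ _ := eVariationOn.sum_le hu fun _ => mem_univ _

theorem eVariationOn_le_ofReal_of_mem_upperBounds {C : ℝ} (hC : C ∈ upperBounds (PartSums f)) :
    eVariationOn f univ ≤ ENNReal.ofReal C := by
  rw [eVariationOn.eVariationOn_eq_strictMonoOn]
  refine iSup_le fun ⟨n, u, hu, _⟩ => ?_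
  rw [Finset.sum_edist_eq_ofReal_sum_norm_sub]
  refine ENNReal.ofReal_le_ofReal (hC ⟨n, fun i => u i, fun i j hij =>
    hu (mem_Iic.2 (Nat.lt_succ_iff.1 i.2)) (mem_Iic.2 (Nat.lt_succ_iff.1 j.2)) hij, ?_⟩)
  rw [← Fin.sum_univ_eq_sum_range (fun i => ‖f (u (i + 1)) - f (u i)‖)]
  simp [Fin.val_succ]

theorem BoundedVariationOn.bddAbove_partSums (hf : BoundedVariationOn f univ) :
    BddAbove (PartSums f) :=
  ⟨(eVariationOn f univ).toReal, fun _ hs =>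
    (ENNReal.ofReal_le_iff_le_toReal hf).1 (ofReal_le_eVariationOn_of_mem_partSums hs)⟩

theorem sum_edist_le_eVariationOn {ι : Type*} (s : Finset ι) {a b : ι → X}
    (hab : ∀ i ∈ s, (a i : ℝ) < b i)
    (hd : (s : Set ι).PairwiseDisjoint fun i => Ioo (a i : ℝ) (b i)) :
    ∑ i ∈ s, edist (f (a i)) (f (b i)) ≤ eVariationOn f (⋃ i ∈ s, {a i, b i}) := by
  classical
  -- adding the intervals from left to right, each one lies to the right of the previous ones
  induction s using Finset.induction_on_max_value (fun i => (a i : ℝ)) with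
  | empty => simp
  | insert j t hj hmax ih =>
    rw [Finset.sum_insert hj, Finset.set_biUnion_insert, union_comm, add_comm,
      ← eVariationOn.pair]
    refine (add_le_add_left (ih (fun i hi => hab i (Finset.mem_insert_of_mem hi))
      (hd.subset (by simp))) _).trans (eVariationOn.add_le_union f ?_)
    have hbj : (a j : ℝ) < b j := hab j (Finset.mem_insert_self j t)
    intro x hx y hy
    obtain ⟨i, hi, hx⟩ := mem_iUnion₂.1 hx
    have hbi : (b i : ℝ) ≤ a j := by
      have hdisj := Set.Ioo_disjoint_Ioo.1 (hd (Finset.mem_insert_of_mem hi)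
        (Finset.mem_insert_self j t) (ne_of_mem_of_not_mem hi hj))
      rw [max_eq_right (hmax i hi)] at hdisj
      exact (min_le_iff.1 hdisj).resolve_right hbj.not_ge
    have hai := hab i (Finset.mem_insert_of_mem hi)
    have haij := hmax i hi
    rw [← Subtype.coe_le_coe]
    rcases hx with rfl | rfl <;> rcases hy with rfl | rfl <;> linarith

theorem sum_norm_sub_le_of_mem_upperBounds {ι : Type*} {C : ℝ} (hC₀ : 0 ≤ C)
    (hC : C ∈ upperBounds (PartSums f)) (s : Finset ι) {a b : ι → X}
    (hab : ∀ i ∈ s, (a i : ℝ) < b i)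
    (hd : (s : Set ι).PairwiseDisjoint fun i => Ioo (a i : ℝ) (b i)) :
    ∑ i ∈ s, ‖f (b i) - f (a i)‖ ≤ C := by
  rw [← ENNReal.ofReal_le_ofReal_iff hC₀, ← Finset.sum_edist_eq_ofReal_sum_norm_sub]
  simp_rw [edist_comm (f (b _))]
  exact (sum_edist_le_eVariationOn s hab hd).trans
    ((eVariationOn.mono f (subset_univ _)).trans (eVariationOn_le_ofReal_of_mem_upperBounds hC))

theorem absCont_of_approx
    (h : ∀ ε > 0, ∃ f : X → E, AbsCont f ∧ ε ∈ upperBounds (PartSums fun x => f x - g x)) :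
    AbsCont g := by
  intro ε hε
  obtain ⟨f, hf, hfg⟩ := h (ε / 2) (half_pos hε)
  obtain ⟨δ, hδ, H⟩ := hf (ε / 2) (half_pos hε)
  refine ⟨δ, hδ, fun n a b hab hd hlen => ?_⟩
  have hdiff := sum_norm_sub_le_of_mem_upperBounds (half_pos hε).le hfg Finset.univ
    (fun i _ => hab i) (fun i _ j _ hij => hd i j hij)
  calc ∑ i, ‖g (b i) - g (a i)‖
      ≤ ∑ i, (‖f (b i) - f (a i)‖ + ‖f (b i) - g (b i) - (f (a i) - g (a i))‖) :=
        Finset.sum_le_sum fun i _ => by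
          rw [show g (b i) - g (a i) =
            f (b i) - f (a i) - (f (b i) - g (b i) - (f (a i) - g (a i))) by abel]
          exact norm_sub_le _ _
    _ = ∑ i, ‖f (b i) - f (a i)‖ + ∑ i, ‖f (b i) - g (b i) - (f (a i) - g (a i))‖ :=
        Finset.sum_add_distrib
    _ < ε := by linarith [H n a b hab hd hlen]

theorem mem_upperBounds_partSums_of_tendsto {ι : Type*} {l : Filter ι} [l.NeBot]
    {F : ι → X → E} (hF : ∀ x, Tendsto (fun i => F i x) l (𝓝 (g x))) {C : ℝ}
    (hC : ∀ᶠ i in l, C ∈ upperBounds (PartSums (F i))) : C ∈ upperBounds (PartSums g) := by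
  rintro _ ⟨n, x, hx, rfl⟩
  refine le_of_tendsto (tendsto_finsetSum _ fun k _ => ((hF _).sub (hF _)).norm) ?_
  filter_upwards [hC] with i hi using hi ⟨n, x, hx, rfl⟩

theorem supNorm_nonneg (f : X → E) : 0 ≤ supNorm f :=
  Real.sSup_nonneg (by rintro _ ⟨x, rfl⟩; positivity)

theorem var_nonneg (f : X → E) : 0 ≤ var f :=
  Real.sSup_nonneg (by rintro _ ⟨n, x, -, rfl⟩; positivity)

theorem supNorm_le {C : ℝ} (hC : 0 ≤ C) (h : ∀ x, ‖f x‖ ≤ C) : supNorm f ≤ C :=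
  Real.sSup_le (by rintro _ ⟨x, rfl⟩; exact h x) hC

theorem var_le {C : ℝ} (hC : 0 ≤ C) (h : C ∈ upperBounds (PartSums f)) : var f ≤ C :=
  Real.sSup_le h hC

theorem AbsCont.norm_le_ACnorm (hX : IsCompact X) (hf : AbsCont f) (x : X) :
    ‖f x‖ ≤ ACnorm f := by
  obtain ⟨M, hM⟩ := hf.exists_norm_le hX
  have hsup : ‖f x‖ ≤ supNorm f := le_csSup ⟨M, by rintro _ ⟨y, rfl⟩; exact hM y⟩ ⟨x, rfl⟩
  exact hsup.trans (le_add_of_nonneg_right (var_nonneg f))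

theorem AbsCont.ACnorm_mem_upperBounds_partSums (hX : IsCompact X) (hf : AbsCont f) :
    ACnorm f ∈ upperBounds (PartSums f) := fun _ hs =>
  (le_csSup (hf.boundedVariationOn hX).bddAbove_partSums hs).trans
    (le_add_of_nonneg_left (supNorm_nonneg f))

end

theorem AC_complete_general {E : Type*} [NormedAddCommGroup E] [CompleteSpace E]
    {X : Set ℝ} (hX : IsCompact X)
    (f : ℕ → X → E) (hf : ∀ n, AbsCont (f n))
    (hCauchy : ∀ ε > (0 : ℝ), ∃ N : ℕ, ∀ m ≥ N, ∀ n ≥ N,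
      ACnorm (fun x => f m x - f n x) < ε) :
    ∃ g : X → E, AbsCont g ∧
      ∀ ε > (0 : ℝ), ∃ N : ℕ, ∀ n ≥ N, ACnorm (fun x => f n x - g x) < ε := by
  have hD (m n : ℕ) : AbsCont fun x => f m x - f n x := (hf m).sub (hf n)
  have hcauchy (x : X) : CauchySeq fun n => f n x := Metric.cauchySeq_iff.2 fun ε hε => by
    obtain ⟨N, hN⟩ := hCauchy ε hε
    exact ⟨N, fun m hm n hn => (dist_eq_norm _ _).trans_lt
      (((hD m n).norm_le_ACnorm hX x).trans_lt (hN m hm n hn))⟩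
  choose g hg using fun x => cauchySeq_tendsto_of_complete (hcauchy x)
  have hclose : ∀ ε > 0, ∃ N, ∀ n ≥ N, (∀ x, ‖f n x - g x‖ ≤ ε) ∧
      ε ∈ upperBounds (PartSums fun x => f n x - g x) := by
    intro ε hε
    obtain ⟨N, hN⟩ := hCauchy ε hε
    have hlim (n : ℕ) (x : X) : Tendsto (fun m => f n x - f m x) atTop (𝓝 (f n x - g x)) :=
      (hg x).const_sub _
    refine ⟨N, fun n hn => ⟨fun x => le_of_tendsto (hlim n x).norm ?_,
      mem_upperBounds_partSums_of_tendsto (hlim n) ?_⟩⟩ <;>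
      filter_upwards [eventually_ge_atTop N] with m hm
    · exact ((hD n m).norm_le_ACnorm hX x).trans (hN n hn m hm).le
    · exact upperBounds_mono_mem (hN n hn m hm).le ((hD n m).ACnorm_mem_upperBounds_partSums hX)
  refine ⟨g, absCont_of_approx fun ε hε => ?_, fun ε hε => ?_⟩
  · obtain ⟨N, hN⟩ := hclose ε hε
    exact ⟨f N, hf N, (hN N le_rfl).2⟩
  · obtain ⟨N, hN⟩ := hclose (ε / 3) (by positivity)
    refine ⟨N, fun n hn => ?_⟩
    have hsup := supNorm_le (by positivity) (hN n hn).1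
    have hvar := var_le (by positivity) (hN n hn).2
    rw [ACnorm]
    linarith

/-- `AC(X,E)` with the norm `‖·‖_AC` is complete: every Cauchy sequence of absolutely
continuous functions converges in the AC norm to an absolutely continuous function. -/
theorem AC_complete {E : Type*} [NormedAddCommGroup E] [NormedSpace ℝ E] [CompleteSpace E]
    {X : Set ℝ} (hX : IsCompact X) (hXne : X.Nonempty)
    (f : ℕ → X → E) (hf : ∀ n, AbsCont (f n))
    (hCauchy : ∀ ε > (0 : ℝ), ∃ N : ℕ, ∀ m ≥ N, ∀ n ≥ N,
      ACnorm (fun x => f m x - f n x) < ε) :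
    ∃ g : X → E, AbsCont g ∧
      ∀ ε > (0 : ℝ), ∃ N : ℕ, ∀ n ≥ N, ACnorm (fun x => f n x - g x) < ε :=
  AC_complete_general hX f hf hCauchy
end

section
/- For every finite open covering {V₁,...,Vₙ} of a compact set X ⊆ ℝ, there exist absolutely continuous functions f₁,...,fₙ : X → ℝ with 0 ≤ fᵢ ≤ 1, the cozero set c(fᵢ) := {x ∈ X : fᵢ(x) ≠ 0} contained in Vᵢ for each i, and ∑ᵢ fᵢ = 1 on X (a partition of unity by absolutely continuous functions). -/
open Set

lemma quot_bound (a b A B c d m : ℝ) (hc : 0 < c) (hcA : c ≤ A) (hcB : c ≤ B)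
    (hb : 0 ≤ b) (hbB : b ≤ B) (hab : |a - b| ≤ d) (hAB : |A - B| ≤ m * d)
    (hd : 0 ≤ d) : |a / A - b / B| ≤ (m + 1) / c * d := by
  have hA : 0 < A := lt_of_lt_of_le hc hcA
  have hB : 0 < B := lt_of_lt_of_le hc hcB
  have hm : 0 ≤ m * d := le_trans (abs_nonneg _) hAB
  have heq : a / A - b / B = (a - b) / A + b * (B - A) / (B * A) := by
    field_simp; ring
  rw [heq]
  have h1 : |(a - b) / A| ≤ d / c := by
    rw [abs_div, abs_of_pos hA]
    exact div_le_div₀ hd hab hc hcA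
  have h2 : |b * (B - A) / (B * A)| ≤ m * d / c := by
    rw [abs_div, abs_mul, abs_of_pos (mul_pos hB hA), abs_of_nonneg hb]
    rw [div_le_div_iff₀ (mul_pos hB hA) hc]
    have hBA : |B - A| ≤ m * d := by rwa [abs_sub_comm]
    calc b * |B - A| * c ≤ B * (m * d) * c :=
          mul_le_mul_of_nonneg_right (mul_le_mul hbB hBA (abs_nonneg _) hB.le) hc.le
      _ ≤ B * (m * d) * A := by
          apply mul_le_mul_of_nonneg_left hcA (by positivity)
      _ = m * d * (B * A) := by ring
  calc |(a - b) / A + b * (B - A) / (B * A)| ≤ d / c + m * d / c :=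
        le_trans (abs_add_le _ _) (add_le_add h1 h2)
    _ = (m + 1) / c * d := by field_simp; ring

/-- A function with a pointwise Lipschitz-type bound is absolutely continuous. -/
lemma absCont_of_lipschitz_bound {X : Set ℝ} (f : X → ℝ) (K : ℝ) (hK : 0 ≤ K)
    (h : ∀ x y : X, |f x - f y| ≤ K * |(x : ℝ) - y|) : AbsCont f := by
  intro ε hε
  refine ⟨ε / (K + 1), by positivity, ?_⟩
  intro m a b hab _ hsum
  have hsum' : ∀ j : Fin m, ‖f (b j) - f (a j)‖ ≤ K * ((b j : ℝ) - a j) := by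
    intro j
    have := h (b j) (a j)
    rw [abs_of_nonneg (sub_nonneg.2 (hab j).le)] at this
    simpa [Real.norm_eq_abs] using this
  calc (∑ j, ‖f (b j) - f (a j)‖) ≤ ∑ j, K * ((b j : ℝ) - a j) :=
        Finset.sum_le_sum fun j _ => hsum' j
    _ = K * ∑ j, ((b j : ℝ) - a j) := by rw [Finset.mul_sum]
    _ ≤ K * (ε / (K + 1)) := by
        refine mul_le_mul_of_nonneg_left ?_ hK
        exact hsum.le
    _ < ε := by
        rw [mul_div_assoc'] ; rw [div_lt_iff₀ (by positivity)]
        nlinarith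

/-- Partition of unity by absolutely continuous functions subordinated to a finite
open covering of the compact set `X`. -/
theorem absCont_partition_of_unity {X : Set ℝ} (hX : IsCompact X)
    (n : ℕ) (V : Fin n → Set X) (hV : ∀ i, IsOpen (V i))
    (hcover : (⋃ i, V i) = Set.univ) :
    ∃ f : Fin n → X → ℝ,
      (∀ i, AbsCont (f i)) ∧
      (∀ i x, 0 ≤ f i x ∧ f i x ≤ 1) ∧
      (∀ i, {x : X | f i x ≠ 0} ⊆ V i) ∧
      (∀ x, (∑ i, f i x) = 1) := by
  by_cases hne : X.Nonempty
  case neg =>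
    refine ⟨fun _ _ => 0, ?_, ?_, ?_, ?_⟩
    · intro i ε hε
      exact ⟨1, one_pos, fun m a b _ _ _ => by simpa using hε⟩
    · intro i x; norm_num
    · intro i x hx; exact absurd ⟨(x : ℝ), x.2⟩ hne
    · intro x; exact absurd ⟨(x : ℝ), x.2⟩ hne
  case pos =>
  classical
  -- a point outside X
  set p : ℝ := sSup X + 1 with hp_def
  have hbdd : BddAbove X := hX.bddAbove
  have hpX : p ∉ X := by
    intro hp
    have := le_csSup hbdd hp
    simp [hp_def] at this
    linarith
  -- the closed sets
  set C : Fin n → Set ℝ := fun i => (Subtype.val '' (V i)ᶜ) ∪ {p} with hC_def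
  have hXc : CompactSpace X := isCompact_iff_compactSpace.mp hX
  have hCcomp : ∀ i, IsCompact (C i) := by
    intro i
    refine IsCompact.union ?_ isCompact_singleton
    exact ((hV i).isClosed_compl.isCompact).image continuous_subtype_val
  have hCclosed : ∀ i, IsClosed (C i) := fun i => (hCcomp i).isClosed
  have hCne : ∀ i, (C i).Nonempty := fun i => ⟨p, Or.inr rfl⟩
  set g : Fin n → ℝ → ℝ := fun i x => Metric.infDist x (C i) with hg_def
  have hg_nonneg : ∀ i x, 0 ≤ g i x := fun i x => Metric.infDist_nonneg
  have hg_lip : ∀ i x y, |g i x - g i y| ≤ |x - y| := by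
    intro i x y
    rw [abs_sub_le_iff]
    constructor
    · have := Metric.infDist_le_infDist_add_dist (x := x) (y := y) (s := C i)
      rw [Real.dist_eq] at this; linarith
    · have := Metric.infDist_le_infDist_add_dist (x := y) (y := x) (s := C i)
      rw [Real.dist_eq, abs_sub_comm] at this; linarith
  -- membership facts
  have hmem_of_pos : ∀ (i) (x : X), g i (x : ℝ) ≠ 0 → x ∈ V i := by
    intro i x hx
    by_contra hxV
    have : (x : ℝ) ∈ C i := Or.inl ⟨x, hxV, rfl⟩
    exact hx (Metric.infDist_zero_of_mem this)
  have hpos_of_mem : ∀ (i) (x : X), x ∈ V i → 0 < g i (x : ℝ) := by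
    intro i x hx
    rw [← (hCclosed i).notMem_iff_infDist_pos (hCne i)] at *
    rintro (⟨y, hy, hyx⟩ | hp)
    · have : y = x := Subtype.ext hyx
      exact hy (this ▸ hx)
    · exact hpX (hp ▸ x.2)
  set G : ℝ → ℝ := fun x => ∑ i, g i x with hG_def
  have hG_lip : ∀ x y, |G x - G y| ≤ (n : ℝ) * |x - y| := by
    intro x y
    have : G x - G y = ∑ i, (g i x - g i y) := by rw [Finset.sum_sub_distrib]
    rw [this]
    calc |∑ i, (g i x - g i y)| ≤ ∑ i, |g i x - g i y| := Finset.abs_sum_le_sum_abs _ _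
      _ ≤ ∑ _i : Fin n, |x - y| := Finset.sum_le_sum fun i _ => hg_lip i x y
      _ = (n : ℝ) * |x - y| := by simp [mul_comm]
  have hG_pos : ∀ x : X, 0 < G (x : ℝ) := by
    intro x
    have hx : x ∈ ⋃ i, V i := by rw [hcover]; trivial
    obtain ⟨i, hi⟩ := mem_iUnion.mp hx
    have h1 : 0 < g i (x : ℝ) := hpos_of_mem i x hi
    have h2 : g i (x : ℝ) ≤ G (x : ℝ) :=
      Finset.single_le_sum (fun j _ => hg_nonneg j (x : ℝ)) (Finset.mem_univ i)
    linarith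
  have hG_cont : Continuous G := by
    apply continuous_finset_sum
    intro i _
    exact Metric.continuous_infDist_pt (C i)
  -- minimum of G on X
  obtain ⟨x₀, hx₀X, hx₀min⟩ := hX.exists_isMinOn hne (hG_cont.continuousOn)
  set c : ℝ := G x₀ with hc_def
  have hc_pos : 0 < c := hG_pos ⟨x₀, hx₀X⟩
  have hc_le : ∀ x : X, c ≤ G (x : ℝ) := fun x => hx₀min x.2
  have hg_le_G : ∀ (i) (x : ℝ), g i x ≤ G x := fun i x =>
    Finset.single_le_sum (fun j _ => hg_nonneg j x) (Finset.mem_univ i)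
  -- the partition of unity
  set f : Fin n → X → ℝ := fun i x => g i (x : ℝ) / G (x : ℝ) with hf_def
  set K : ℝ := ((n : ℝ) + 1) / c with hK_def
  have hK_nonneg : 0 ≤ K := by positivity
  have key : ∀ (i) (x y : X), |f i x - f i y| ≤ K * |(x : ℝ) - y| := by
    intro i x y
    have h := quot_bound (g i (x : ℝ)) (g i (y : ℝ)) (G (x : ℝ)) (G (y : ℝ)) c
      |(x : ℝ) - y| (n : ℝ) hc_pos (hc_le x) (hc_le y) (hg_nonneg i _) (hg_le_G i _)
      (hg_lip i _ _) (hG_lip _ _) (abs_nonneg _)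
    simpa [hf_def, hK_def, mul_comm] using h
  refine ⟨f, ?_, ?_, ?_, ?_⟩
  · intro i
    exact absCont_of_lipschitz_bound (f i) K hK_nonneg (key i)
  · intro i x
    constructor
    · exact div_nonneg (hg_nonneg i _) (hG_pos x).le
    · rw [div_le_one (hG_pos x)]; exact hg_le_G i _
  · intro i x hx
    simp only [mem_setOf_eq, hf_def] at hx
    have : g i (x : ℝ) ≠ 0 := fun h => hx (by rw [h, zero_div])
    exact hmem_of_pos i x this
  · intro x
    simp only [hf_def]
    rw [← Finset.sum_div, div_self (hG_pos x).ne']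
end

section
/- If X ⊆ ℝ is compact, a ∈ ℝ, and f : X → E is absolutely continuous with f constant equal to 0 at every point of X ∩ {a} (i.e., f(a)=0 if a ∈ X), then the truncated function f·χ_A with A = (-∞, a) ∩ X is absolutely continuous on X. -/
open Set

/-! An interval `[x, y]` of `X` either lies on one side of `a`, where the truncation agrees with `f`
or with `0`, or straddles `a`. A straddling interval is replaced by `[x, a]`, over which `f` varies
exactly as much as the truncation does over `[x, y]`, because `f a = 0`. If `a ∉ X`, closedness of
`X` keeps short intervals with endpoints in `X` from straddling `a` at all. -/

theorem AbsCont.of_forall_exists_norm_sub_le {E : Type*} [NormedAddCommGroup E] {X : Set ℝ}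
    {f g : X → E} (hf : AbsCont f) {η : ℝ} (hη : 0 < η)
    (hfg : ∀ x y : X, (x : ℝ) < y → (y : ℝ) - x < η →
      ∃ z : X, (x : ℝ) < z ∧ (z : ℝ) ≤ y ∧ ‖g y - g x‖ ≤ ‖f z - f x‖) :
    AbsCont g := by
  intro ε hε
  obtain ⟨δ, hδ, hfδ⟩ := hf ε hε
  refine ⟨min δ η, lt_min hδ hη, fun n a b hab hdisj hlen => ?_⟩
  have hshort : ∀ i, (b i : ℝ) - a i < η := fun i =>
    calc (b i : ℝ) - a i ≤ ∑ j, ((b j : ℝ) - a j) :=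
          Finset.single_le_sum (fun j _ => (sub_pos.2 (hab j)).le) (Finset.mem_univ i)
      _ < η := hlen.trans_le (min_le_right _ _)
  choose z haz hzb hnorm using fun i => hfg (a i) (b i) (hab i) (hshort i)
  have hdisj' : ∀ i j, i ≠ j → Disjoint (Ioo (a i : ℝ) (z i)) (Ioo (a j : ℝ) (z j)) :=
    fun i j hij => (hdisj i j hij).mono (Ioo_subset_Ioo_right (hzb i)) (Ioo_subset_Ioo_right (hzb j))
  have hlen' : ∑ i, ((z i : ℝ) - a i) < δ :=
    calc ∑ i, ((z i : ℝ) - a i) ≤ ∑ i, ((b i : ℝ) - a i) :=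
          Finset.sum_le_sum fun i _ => sub_le_sub_right (hzb i) _
      _ < δ := hlen.trans_le (min_le_left _ _)
  calc ∑ i, ‖g (b i) - g (a i)‖ ≤ ∑ i, ‖f (z i) - f (a i)‖ := Finset.sum_le_sum fun i _ => hnorm i
    _ < ε := hfδ n a z haz hdisj' hlen'

theorem IsClosed.exists_pos_forall_mem_of_abs_sub_lt {X : Set ℝ} (hX : IsClosed X) (a : ℝ) :
    ∃ η > 0, ∀ x ∈ X, |a - x| < η → a ∈ X := by
  by_cases ha : a ∈ X
  · exact ⟨1, one_pos, fun _ _ _ => ha⟩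
  obtain ⟨η, hη, hball⟩ := Metric.isOpen_iff.mp hX.isOpen_compl a ha
  refine ⟨η, hη, fun x hx hxa => absurd hx (hball ?_)⟩
  rwa [Metric.mem_ball, Real.dist_eq, abs_sub_comm]

theorem exists_norm_truncation_sub_le {E : Type*} [NormedAddCommGroup E] {X : Set ℝ}
    (a : ℝ) (f : X → E) (hfa : ∀ x : X, (x : ℝ) = a → f x = 0) {x y : X} (hxy : (x : ℝ) < y)
    (hstraddle : (x : ℝ) < a → a ≤ y → a ∈ X) :
    ∃ z : X, (x : ℝ) < z ∧ (z : ℝ) ≤ y ∧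
      ‖(if (y : ℝ) < a then f y else 0) - (if (x : ℝ) < a then f x else 0)‖ ≤ ‖f z - f x‖ := by
  by_cases hya : (y : ℝ) < a
  · exact ⟨y, hxy, le_rfl, by simp [hya, hxy.trans hya]⟩
  by_cases hxa : (x : ℝ) < a
  · have hay : a ≤ y := not_lt.1 hya
    have hfa' : f ⟨a, hstraddle hxa hay⟩ = 0 := hfa _ rfl
    exact ⟨⟨a, hstraddle hxa hay⟩, hxa, hay, by simp [hya, hxa, hfa']⟩
  · exact ⟨y, hxy, le_rfl, by simp [hya, hxa]⟩

/-- If `f` is absolutely continuous and vanishes at `a` (whenever `a ∈ X`), then the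
truncation `f·χ_{(-∞,a)∩X}` is absolutely continuous. -/
theorem absCont_truncation {E : Type*} [NormedAddCommGroup E] {X : Set ℝ}
    (hX : IsCompact X) (a : ℝ) (f : X → E) (hf : AbsCont f)
    (hfa : ∀ x : X, (x : ℝ) = a → f x = 0) :
    AbsCont (fun x : X => if (x : ℝ) < a then f x else 0) := by
  obtain ⟨η, hη, hmem⟩ := hX.isClosed.exists_pos_forall_mem_of_abs_sub_lt a
  refine hf.of_forall_exists_norm_sub_le hη fun x y hxy hlen => ?_
  refine exists_norm_truncation_sub_le a f hfa hxy fun hxa hay => hmem x x.2 ?_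
  rw [abs_of_pos (sub_pos.2 hxa)]
  linarith
end

section
/- Let T : AC(X,E) → AC(Y,F) be a separating bijective linear map with support map h : Y → X, and let y ∈ Y. If f ∈ AC(X,E) vanishes on an open neighborhood U of h(y) in X, then Tf(y) = 0. -/
open Set

/-- `T` is separating on absolutely continuous functions: disjoint cozero sets are
mapped to disjoint cozero sets. -/
def Separating {E F : Type*} [NormedAddCommGroup E] [NormedAddCommGroup F]
    {X Y : Set ℝ} (T : (X → E) → (Y → F)) : Prop :=
  ∀ f g : X → E, AbsCont f → AbsCont g → (∀ x, f x = 0 ∨ g x = 0) →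
    ∀ y, T f y = 0 ∨ T g y = 0

/-- `x ∈ supp(δ_y ∘ T)`: every open neighborhood `U` of `x` admits an absolutely
continuous `f` with cozero set contained in `U` and `T f y ≠ 0`. -/
def InSupp {E F : Type*} [NormedAddCommGroup E] [NormedAddCommGroup F]
    {X Y : Set ℝ} (T : (X → E) → (Y → F)) (y : Y) (x : X) : Prop :=
  ∀ U : Set X, IsOpen U → x ∈ U →
    ∃ f : X → E, AbsCont f ∧ (∀ z, f z ≠ 0 → z ∈ U) ∧ T f y ≠ 0

/-- If `f` vanishes on an open neighborhood of `h y`, then `T f y = 0`. -/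
theorem Tf_vanishes_near_support {𝕜 : Type*} [RCLike 𝕜]
    {E F : Type*} [NormedAddCommGroup E] [NormedSpace 𝕜 E]
    [NormedAddCommGroup F] [NormedSpace 𝕜 F]
    {X Y : Set ℝ} (hX : IsCompact X) (hY : IsCompact Y)
    (T : (X → E) → (Y → F))
    (hadd : ∀ f g : X → E, T (f + g) = T f + T g)
    (hsmul : ∀ (c : 𝕜) (f : X → E), T (c • f) = c • T f)
    (hmaps : ∀ f : X → E, AbsCont f → AbsCont (T f))
    (hinj : ∀ f g : X → E, AbsCont f → AbsCont g → T f = T g → f = g)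
    (hsurj : ∀ g : Y → F, AbsCont g → ∃ f : X → E, AbsCont f ∧ T f = g)
    (hsep : Separating T)
    (h : Y → X) (hsupp : ∀ (y : Y) (x : X), InSupp T y x ↔ x = h y)
    (y : Y) (f : X → E) (hf : AbsCont f) (U : Set X) (hU : IsOpen U)
    (hyU : h y ∈ U) (hfU : ∀ x ∈ U, f x = 0) :
    T f y = 0 := by
  obtain ⟨g, hg, hgU, hgy⟩ := (hsupp y (h y)).mpr rfl U hU hyU
  have hdisj : ∀ x, f x = 0 ∨ g x = 0 := by
    intro x
    by_cases hx : g x = 0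
    · exact Or.inr hx
    · exact Or.inl (hfU x (hgU x hx))
  rcases hsep f g hf hg hdisj y with h0 | h0
  · exact h0
  · exact absurd h0 hgy
end

section
/- Suppose E and F are n-dimensional normed spaces, T : AC(X,E) → AC(Y,F) is a separating linear bijection with support map h, and f ∈ AC(X,E) satisfies f(h(y₀)) = 0 for some y₀ ∈ Y. Then there exists y₁ ∈ h⁻¹(h(y₀)) such that the vectors T(ê₁)(y₁), ..., T(êₙ)(y₁) form a basis of F, where {e₁,...,eₙ} is a basis of E and êᵢ denotes the constant function with value eᵢ. -/
open Set

/-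
Take `y₁` in the fiber `h⁻¹(h y₀)` at which `T g` vanishes for every `g` vanishing at
`h y₀` (any point of the fiber if its frontier is empty, a frontier point otherwise; a frontier
point lies in the fiber because `h y₁` is in the support of `δ_{y₁} ∘ T`). Then `T g (y₁)` depends
only on `g (h y₀)`, so `v ↦ T v̂ (y₁)` is a linear map `E → F`, surjective because `T` is, and the
images of the `n` vectors `bᵢ` span the `n`-dimensional space `F`, hence form a basis.
-/

lemma absCont_const {E : Type*} [NormedAddCommGroup E] {X : Set ℝ} (c : E) :
    AbsCont (fun _ : X => c) :=
  fun ε hε => ⟨1, one_pos, fun n a b _ _ _ => by simpa using hε⟩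

lemma AbsCont.sub_s14 {E : Type*} [NormedAddCommGroup E] {X : Set ℝ} {f g : X → E}
    (hf : AbsCont f) (hg : AbsCont g) : AbsCont (f - g) := by
  intro ε hε
  obtain ⟨δ₁, hδ₁, H₁⟩ := hf (ε / 2) (by linarith)
  obtain ⟨δ₂, hδ₂, H₂⟩ := hg (ε / 2) (by linarith)
  refine ⟨min δ₁ δ₂, lt_min hδ₁ hδ₂, fun n a b hab hdisj hsum => ?_⟩
  have h₁ := H₁ n a b hab hdisj (hsum.trans_le (min_le_left _ _))
  have h₂ := H₂ n a b hab hdisj (hsum.trans_le (min_le_right _ _))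
  calc ∑ i, ‖(f - g) (b i) - (f - g) (a i)‖
      ≤ ∑ i, (‖f (b i) - f (a i)‖ + ‖g (b i) - g (a i)‖) := by
        refine Finset.sum_le_sum fun i _ => ?_
        rw [Pi.sub_apply, Pi.sub_apply, sub_sub_sub_comm]
        exact norm_sub_le _ _
    _ < ε / 2 + ε / 2 := by rw [Finset.sum_add_distrib]; exact add_lt_add h₁ h₂
    _ = ε := add_halves ε

lemma LinearMap.linearIndependent_and_span_eq_top_comp_basis {K V W ι : Type*} [Field K]
    [AddCommGroup V] [Module K V] [AddCommGroup W] [Module K W] [Fintype ι]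
    (b : Module.Basis ι K V) {S : V →ₗ[K] W} (hS : Function.Surjective S)
    (hdim : Module.finrank K W = Fintype.card ι) :
    LinearIndependent K (S ∘ b) ∧ Submodule.span K (Set.range (S ∘ b)) = ⊤ := by
  have hspan : Submodule.span K (Set.range (S ∘ b)) = ⊤ := by
    rw [Set.range_comp, Submodule.span_image, b.span_eq, Submodule.map_top,
      LinearMap.range_eq_top.mpr hS]
  exact ⟨linearIndependent_of_top_le_span_of_card_eq_finrank hspan.ge hdim.symm, hspan⟩

section FactorsThroughEval

variable {E F : Type*} [NormedAddCommGroup E] [NormedAddCommGroup F] {X Y : Set ℝ}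

def FactorsThroughEval (T : (X → E) → (Y → F)) (y : Y) (x : X) : Prop :=
  ∀ f : X → E, AbsCont f → f x = 0 → T f y = 0

lemma FactorsThroughEval.eq_of_inSupp {T : (X → E) → (Y → F)} {y : Y} {x x' : X}
    (hT : FactorsThroughEval T y x) (hx' : InSupp T y x') : x' = x := by
  by_contra hne
  obtain ⟨f, hf, hcoz, hTf⟩ := hx' {x}ᶜ isOpen_compl_singleton hne
  exact hTf (hT f hf (not_not.mp fun hfx => hcoz x hfx rfl))

lemma exists_mem_fiber_factorsThroughEval (T : (X → E) → (Y → F)) (h : Y → X)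
    (hsupp : ∀ y, InSupp T y (h y)) (y₀ : Y)
    (hprop : ∀ f : X → E, AbsCont f → f (h y₀) = 0 →
      (frontier {y : Y | h y = h y₀} = ∅ → ∀ y : Y, h y = h y₀ → T f y = 0) ∧
      (frontier {y : Y | h y = h y₀} ≠ ∅ →
        ∀ y ∈ frontier {y : Y | h y = h y₀}, T f y = 0)) :
    ∃ y₁ : Y, h y₁ = h y₀ ∧ FactorsThroughEval T y₁ (h y₀) := by
  by_cases hfr : frontier {y : Y | h y = h y₀} = ∅
  · exact ⟨y₀, rfl, fun f hf hf0 => (hprop f hf hf0).1 hfr y₀ rfl⟩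
  · obtain ⟨y₁, hy₁⟩ := nonempty_iff_ne_empty.mpr hfr
    have hfac : FactorsThroughEval T y₁ (h y₀) := fun f hf hf0 => (hprop f hf hf0).2 hfr y₁ hy₁
    exact ⟨y₁, hfac.eq_of_inSupp (hsupp y₁), hfac⟩

lemma FactorsThroughEval.surjective_constEval {𝕜 : Type*} [RCLike 𝕜] [NormedSpace 𝕜 E]
    [NormedSpace 𝕜 F] {T : (X → E) →ₗ[𝕜] (Y → F)}
    (hsurj : ∀ g : Y → F, AbsCont g → ∃ f : X → E, AbsCont f ∧ T f = g)
    {y : Y} {x : X} (hT : FactorsThroughEval T y x) :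
    Function.Surjective ((LinearMap.proj y).comp (T.comp LinearMap.const)) := by
  intro w
  obtain ⟨f, hf, hTf⟩ := hsurj (fun _ => w) (absCont_const w)
  refine ⟨f x, ?_⟩
  have hvan : T (f - Function.const X (f x)) y = 0 :=
    hT _ (hf.sub_s14 (absCont_const _)) (sub_self (f x))
  rw [map_sub, Pi.sub_apply, hTf, sub_eq_zero] at hvan
  exact hvan.symm

end FactorsThroughEval

theorem exists_point_basis_general {𝕜 : Type*} [RCLike 𝕜]
    {E F : Type*} [NormedAddCommGroup E] [NormedSpace 𝕜 E]
    [NormedAddCommGroup F] [NormedSpace 𝕜 F]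
    {n : ℕ}
    (hdimF : Module.finrank 𝕜 F = n)
    (b : Module.Basis (Fin n) 𝕜 E)
    {X Y : Set ℝ}
    (T : (X → E) → (Y → F))
    (hadd : ∀ f g : X → E, T (f + g) = T f + T g)
    (hsmul : ∀ (c : 𝕜) (f : X → E), T (c • f) = c • T f)
    (hsurj : ∀ g : Y → F, AbsCont g → ∃ f : X → E, AbsCont f ∧ T f = g)
    (h : Y → X) (hsupp : ∀ (y : Y) (x : X), InSupp T y x ↔ x = h y)
    (hprop : ∀ (f : X → E) (y₀ : Y), AbsCont f → f (h y₀) = 0 →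
      (frontier {y : Y | h y = h y₀} = ∅ → ∀ y : Y, h y = h y₀ → T f y = 0) ∧
      (frontier {y : Y | h y = h y₀} ≠ ∅ →
        ∀ y ∈ frontier {y : Y | h y = h y₀}, T f y = 0))
    (f : X → E) (y₀ : Y) :
    ∃ y₁ : Y, h y₁ = h y₀ ∧
      LinearIndependent 𝕜 (fun i : Fin n => T (fun _ => b i) y₁) ∧
      Submodule.span 𝕜 (Set.range (fun i : Fin n => T (fun _ => b i) y₁)) = ⊤ := by
  obtain ⟨y₁, hy₁, hfac⟩ := exists_mem_fiber_factorsThroughEval T h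
    (fun y => (hsupp y (h y)).mpr rfl) y₀ (fun f => hprop f y₀)
  let Tₗ : (X → E) →ₗ[𝕜] (Y → F) := ⟨⟨T, hadd⟩, hsmul⟩
  have hS := FactorsThroughEval.surjective_constEval (T := Tₗ) hsurj hfac
  exact ⟨y₁, hy₁, LinearMap.linearIndependent_and_span_eq_top_comp_basis b hS
    (by rw [hdimF, Fintype.card_fin])⟩

/-- Lemma 3.1: if `f (h y₀) = 0`, there is `y₁ ∈ h⁻¹(h y₀)` where the images of the
constant basis functions form a basis of `F`. -/
theorem exists_point_basis {𝕜 : Type*} [RCLike 𝕜]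
    {E F : Type*} [NormedAddCommGroup E] [NormedSpace 𝕜 E]
    [NormedAddCommGroup F] [NormedSpace 𝕜 F]
    {n : ℕ} [FiniteDimensional 𝕜 E] [FiniteDimensional 𝕜 F]
    (hdimE : Module.finrank 𝕜 E = n) (hdimF : Module.finrank 𝕜 F = n)
    (b : Module.Basis (Fin n) 𝕜 E)
    {X Y : Set ℝ} (hX : IsCompact X) (hY : IsCompact Y)
    (T : (X → E) → (Y → F))
    (hadd : ∀ f g : X → E, T (f + g) = T f + T g)
    (hsmul : ∀ (c : 𝕜) (f : X → E), T (c • f) = c • T f)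
    (hmaps : ∀ f : X → E, AbsCont f → AbsCont (T f))
    (hinj : ∀ f g : X → E, AbsCont f → AbsCont g → T f = T g → f = g)
    (hsurj : ∀ g : Y → F, AbsCont g → ∃ f : X → E, AbsCont f ∧ T f = g)
    (hsep : Separating T)
    (h : Y → X) (hsupp : ∀ (y : Y) (x : X), InSupp T y x ↔ x = h y)
    (hprop : ∀ (f : X → E) (y₀ : Y), AbsCont f → f (h y₀) = 0 →
      (frontier {y : Y | h y = h y₀} = ∅ → ∀ y : Y, h y = h y₀ → T f y = 0) ∧
      (frontier {y : Y | h y = h y₀} ≠ ∅ →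
        ∀ y ∈ frontier {y : Y | h y = h y₀}, T f y = 0))
    (f : X → E) (y₀ : Y) (hf : AbsCont f) (hf0 : f (h y₀) = 0) :
    ∃ y₁ : Y, h y₁ = h y₀ ∧
      LinearIndependent 𝕜 (fun i : Fin n => T (fun _ => b i) y₁) ∧
      Submodule.span 𝕜 (Set.range (fun i : Fin n => T (fun _ => b i) y₁)) = ⊤ :=
  exists_point_basis_general hdimF b T hadd hsmul hsurj h hsupp hprop f y₀
end

section
/- Let E, F be n-dimensional normed spaces and T : AC(X,E) → AC(Y,F) a separating linear bijection whose support map h is a homeomorphism and which satisfies: f(h(y)) = 0 implies Tf(y) = 0. Then for each y ∈ Y the map J_y : E → F defined by J_y(e) := T(ê)(y) (ê the constant function with value e) is linear, bijective, and continuous, and Tf(y) = J_y(f(h(y))) for all f ∈ AC(X,E) and y ∈ Y. -/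
open Set

/-- Representation of `T` as a weighted composition operator: each
`J_y : e ↦ T ê (y)` is linear, bijective and continuous, and
`T f y = J_y (f (h y))`. -/
theorem weighted_composition_representation {𝕜 : Type*} [RCLike 𝕜]
    {E F : Type*} [NormedAddCommGroup E] [NormedSpace 𝕜 E]
    [NormedAddCommGroup F] [NormedSpace 𝕜 F]
    {n : ℕ} [FiniteDimensional 𝕜 E] [FiniteDimensional 𝕜 F]
    (hdimE : Module.finrank 𝕜 E = n) (hdimF : Module.finrank 𝕜 F = n)
    {X Y : Set ℝ} (hX : IsCompact X) (hY : IsCompact Y)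
    (T : (X → E) → (Y → F))
    (hadd : ∀ f g : X → E, T (f + g) = T f + T g)
    (hsmul : ∀ (c : 𝕜) (f : X → E), T (c • f) = c • T f)
    (hmaps : ∀ f : X → E, AbsCont f → AbsCont (T f))
    (hinj : ∀ f g : X → E, AbsCont f → AbsCont g → T f = T g → f = g)
    (hsurj : ∀ g : Y → F, AbsCont g → ∃ f : X → E, AbsCont f ∧ T f = g)
    (hsep : Separating T)
    (h : Y ≃ₜ X)
    (hloc : ∀ (f : X → E) (y : Y), AbsCont f → f (h y) = 0 → T f y = 0) :
    ∀ y : Y,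
      IsLinearMap 𝕜 (fun e : E => T (fun _ => e) y) ∧
      Function.Bijective (fun e : E => T (fun _ => e) y) ∧
      Continuous (fun e : E => T (fun _ => e) y) ∧
      ∀ f : X → E, AbsCont f → T f y = T (fun _ => f (h y)) y := by
  -- constants are absolutely continuous
  have habs_const : ∀ c : F, AbsCont (fun _ : Y => c) := by
    intro c ε hε
    exact ⟨1, one_pos, fun m a b _ _ _ => by simpa using hε⟩
  -- subtracting a constant preserves absolute continuity
  have habs_sub : ∀ (f : X → E) (c : E), AbsCont f → AbsCont (fun x => f x - c) := by
    intro f c hf ε hε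
    obtain ⟨δ, hδ, H⟩ := hf ε hε
    refine ⟨δ, hδ, fun m a b h1 h2 h3 => ?_⟩
    have := H m a b h1 h2 h3
    simpa [sub_sub_sub_cancel_right] using this
  intro y
  -- the representation property
  have hrep : ∀ f : X → E, AbsCont f → T f y = T (fun _ => f (h y)) y := by
    intro f hf
    set g : X → E := fun x => f x - f (h y) with hg
    have hgabs : AbsCont g := habs_sub f _ hf
    have hg0 : g (h y) = 0 := by simp [hg]
    have hTg : T g y = 0 := hloc g y hgabs hg0
    have hfe : f = g + (fun _ => f (h y)) := by
      funext x; simp [hg]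
    calc T f y = T (g + fun _ => f (h y)) y := by rw [← hfe]
    _ = T g y + T (fun _ => f (h y)) y := by rw [hadd]; rfl
    _ = T (fun _ => f (h y)) y := by rw [hTg, zero_add]
  -- linearity of J_y
  have hlin : IsLinearMap 𝕜 (fun e : E => T (fun _ => e) y) := by
    constructor
    · intro e e'
      have : (fun _ : X => e + e') = (fun _ : X => e) + (fun _ : X => e') := rfl
      rw [this, hadd]; rfl
    · intro c e
      have : (fun _ : X => c • e) = c • (fun _ : X => e) := rfl
      rw [this, hsmul]; rfl
  set J : E →ₗ[𝕜] F := hlin.mk' _ with hJ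
  -- surjectivity of J
  have hJsurj : Function.Surjective (fun e : E => T (fun _ => e) y) := by
    intro u
    obtain ⟨f, hf, hTf⟩ := hsurj (fun _ => u) (habs_const u)
    refine ⟨f (h y), ?_⟩
    have h2 := hrep f hf
    show T (fun _ => f (h y)) y = u
    rw [← h2, hTf]
  have hJsurj' : Function.Surjective J := hJsurj
  have hJinj : Function.Injective J := by
    rw [LinearMap.injective_iff_surjective_of_finrank_eq_finrank
      (by rw [hdimE, hdimF])]
    exact hJsurj'
  have hcont : Continuous (fun e : E => T (fun _ => e) y) :=
    J.continuous_of_finiteDimensional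
  exact ⟨hlin, ⟨hJinj, hJsurj⟩, hcont, hrep⟩
end

section
/- Let E, F be Banach spaces and T : AC(X,E) → AC(Y,F) a biseparating linear map with support maps h : Y → X (for T) and k : X → Y (for T⁻¹). Then h and k are mutually inverse, and hence h is a homeomorphism. -/
open Set

/-! ### Auxiliary lemmas -/

/-- Absolutely continuous functions are (uniformly) continuous. -/
lemma AbsCont.continuous' {F : Type*} [NormedAddCommGroup F] {Y : Set ℝ}
    {g : Y → F} (hg : AbsCont g) : Continuous g := by
  refine UniformContinuous.continuous (Metric.uniformContinuous_iff.mpr ?_)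
  intro ε hε
  obtain ⟨δ, hδ, H⟩ := hg ε hε
  refine ⟨δ, hδ, ?_⟩
  have key : ∀ a b : Y, (a : ℝ) < b → (b : ℝ) - a < δ → ‖g b - g a‖ < ε := by
    intro a b hab hd
    have := H 1 (fun _ => a) (fun _ => b) (fun _ => hab)
      (fun i j hij => absurd (Subsingleton.elim i j) hij) (by simpa using hd)
    simpa using this
  intro a b hab
  rw [Subtype.dist_eq, Real.dist_eq] at hab
  rcases lt_trichotomy (a : ℝ) (b : ℝ) with hlt | heq | hgt
  · have hd : (b : ℝ) - a < δ := by
      rw [abs_sub_comm, abs_of_pos (by linarith)] at hab; linarith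
    have := key a b hlt hd
    rwa [dist_eq_norm, norm_sub_rev]
  · have : a = b := Subtype.ext heq
    subst this; simpa using hε
  · have hd : (a : ℝ) - b < δ := by
      rw [abs_of_pos (by linarith)] at hab; linarith
    have := key b a hgt hd
    rwa [dist_eq_norm]
  
/-- Absolutely continuous functions on a compact set are bounded. -/
lemma AbsCont.bounded' {F : Type*} [NormedAddCommGroup F] {Y : Set ℝ} (hY : IsCompact Y)
    {g : Y → F} (hg : AbsCont g) : ∃ M : ℝ, 0 ≤ M ∧ ∀ z, ‖g z‖ ≤ M := by
  haveI : CompactSpace Y := isCompact_iff_compactSpace.mp hY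
  obtain ⟨C, hC⟩ := (isCompact_univ (X := Y)).exists_bound_of_continuousOn
    hg.continuous'.continuousOn
  exact ⟨max C 0, le_max_right _ _, fun z => (hC z trivial).trans (le_max_left _ _)⟩

/-- Multiplying an absolutely continuous function by a bounded Lipschitz scalar function
preserves absolute continuity. -/
lemma AbsCont.smul' {𝕜 F : Type*} [RCLike 𝕜] [NormedAddCommGroup F] [NormedSpace 𝕜 F]
    {Y : Set ℝ} {g : Y → F} (hg : AbsCont g) (C : Y → 𝕜) {L M : ℝ}
    (hL : 0 ≤ L) (hM : 0 ≤ M)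
    (hlip : ∀ z w : Y, ‖C z - C w‖ ≤ L * |(z : ℝ) - w|)
    (hbd : ∀ z, ‖C z‖ ≤ 1) (hgbd : ∀ z, ‖g z‖ ≤ M) :
    AbsCont (fun z => C z • g z) := by
  intro ε hε
  obtain ⟨δ₁, hδ₁, H₁⟩ := hg (ε / 2) (by linarith)
  refine ⟨min δ₁ (ε / (2 * (L * M + 1))), lt_min hδ₁ (by positivity), ?_⟩
  intro n a b hab hdisj hsum
  have hs₁ : (∑ i, ((b i : ℝ) - a i)) < δ₁ := lt_of_lt_of_le hsum (min_le_left _ _)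
  have hs₂ : (∑ i, ((b i : ℝ) - a i)) < ε / (2 * (L * M + 1)) :=
    lt_of_lt_of_le hsum (min_le_right _ _)
  have h2 := H₁ n a b hab hdisj hs₁
  have hpt : ∀ i : Fin n, ‖C (b i) • g (b i) - C (a i) • g (a i)‖
      ≤ L * M * ((b i : ℝ) - a i) + ‖g (b i) - g (a i)‖ := by
    intro i
    have e : C (b i) • g (b i) - C (a i) • g (a i)
        = (C (b i) - C (a i)) • g (b i) + C (a i) • (g (b i) - g (a i)) := by
      rw [sub_smul, smul_sub]; abel
    rw [e]
    have h1 : ‖(C (b i) - C (a i)) • g (b i)‖ ≤ (L * ((b i : ℝ) - a i)) * M := by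
      rw [norm_smul]
      have hl := hlip (b i) (a i)
      rw [abs_of_pos (sub_pos.mpr (hab i))] at hl
      exact mul_le_mul hl (hgbd _) (norm_nonneg _) (mul_nonneg hL (by linarith [hab i]))
    have h2' : ‖C (a i) • (g (b i) - g (a i))‖ ≤ ‖g (b i) - g (a i)‖ := by
      rw [norm_smul]
      exact mul_le_of_le_one_left (norm_nonneg _) (hbd _)
    calc ‖(C (b i) - C (a i)) • g (b i) + C (a i) • (g (b i) - g (a i))‖
        ≤ ‖(C (b i) - C (a i)) • g (b i)‖ + ‖C (a i) • (g (b i) - g (a i))‖ :=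
          norm_add_le _ _
      _ ≤ (L * ((b i : ℝ) - a i)) * M + ‖g (b i) - g (a i)‖ := add_le_add h1 h2'
      _ = L * M * ((b i : ℝ) - a i) + ‖g (b i) - g (a i)‖ := by ring
  have hsum_le : (∑ i, ‖C (b i) • g (b i) - C (a i) • g (a i)‖)
      ≤ L * M * (∑ i, ((b i : ℝ) - a i)) + ∑ i, ‖g (b i) - g (a i)‖ := by
    calc (∑ i, ‖C (b i) • g (b i) - C (a i) • g (a i)‖)
        ≤ ∑ i, (L * M * ((b i : ℝ) - a i) + ‖g (b i) - g (a i)‖) :=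
          Finset.sum_le_sum (fun i _ => hpt i)
      _ = _ := by rw [Finset.sum_add_distrib, Finset.mul_sum]
  have h3 : L * M * (∑ i, ((b i : ℝ) - a i)) ≤ ε / 2 := by
    have hstep : L * M * (∑ i, ((b i : ℝ) - a i)) ≤ L * M * (ε / (2 * (L * M + 1))) :=
      mul_le_mul_of_nonneg_left hs₂.le (by positivity)
    have hPD : (L * M + 1) * (ε / (2 * (L * M + 1))) = ε / 2 := by
      field_simp
    have : L * M * (ε / (2 * (L * M + 1))) ≤ (L * M + 1) * (ε / (2 * (L * M + 1))) :=
      mul_le_mul_of_nonneg_right (by linarith) (by positivity)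
    linarith
  linarith

/-- If `f` vanishes on an open neighborhood of a point in the support of `δ_y ∘ T`,
then `T f y = 0`. -/
lemma vanish_of_zero_near {A B : Type*} [NormedAddCommGroup A] [NormedAddCommGroup B]
    {P Q : Set ℝ} {T : (P → A) → (Q → B)} (hsep : Separating T)
    {y : Q} {x : P} (hx : InSupp T y x) {f : P → A} (hf : AbsCont f)
    {U : Set P} (hU : IsOpen U) (hxU : x ∈ U) (hfU : ∀ z ∈ U, f z = 0) :
    T f y = 0 := by
  by_contra hne
  obtain ⟨f', hf', hcoz, hTf'⟩ := hx U hU hxU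
  have hd : ∀ z, f z = 0 ∨ f' z = 0 := by
    intro z
    by_cases hz : z ∈ U
    · exact Or.inl (hfU z hz)
    · exact Or.inr (by by_contra hc; exact hz (hcoz z hc))
  rcases hsep f f' hf hf' hd y with h0 | h0
  · exact hne h0
  · exact hTf' h0

/-- Key one-sided lemma: the support map of `T⁻¹` is a left inverse of the support
map of `T`. -/
lemma support_maps_inverse {𝕜 E F : Type*} [RCLike 𝕜] [NormedAddCommGroup E]
    [NormedAddCommGroup F] [NormedSpace 𝕜 F]
    {X Y : Set ℝ} (hY : IsCompact Y)
    (T : (X → E) → (Y → F)) (S : (Y → F) → (X → E))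
    (hmaps : ∀ f : X → E, AbsCont f → AbsCont (T f))
    (hSmaps : ∀ g : Y → F, AbsCont g → AbsCont (S g))
    (hTS : ∀ g : Y → F, AbsCont g → T (S g) = g)
    (hsep : Separating T) (hSsep : Separating S)
    (h : Y → X) (hsupp : ∀ (y : Y) (x : X), InSupp T y x ↔ x = h y)
    (k : X → Y) (hksupp : ∀ (x : X) (y : Y), InSupp S x y ↔ y = k x)
    (hkcont : Continuous k) : ∀ y, k (h y) = y := by
  intro y
  by_contra hne
  have hInT : InSupp T y (h y) := (hsupp y (h y)).mpr rfl
  set x : X := h y with hxdef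
  set y' : Y := k x with hy'def
  have hyy' : (y' : ℝ) ≠ (y : ℝ) := fun hc => hne (Subtype.ext hc)
  set r : ℝ := |(y' : ℝ) - y| with hrdef
  have hrpos : 0 < r := abs_pos.mpr (sub_ne_zero.mpr hyy')
  -- the bump function
  set φ : ℝ → ℝ := fun t => max 0 (1 - (2 / r) * |t - y|) with hφdef
  have hφy : φ y = 1 := by simp [hφdef]
  have hφ0 : ∀ t : ℝ, r / 2 < |t - y| → φ t = 0 := by
    intro t ht
    have h1 : (2 / r) * (r / 2) < (2 / r) * |t - y| :=
      mul_lt_mul_of_pos_left ht (by positivity)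
    have h2 : (2 / r) * (r / 2) = 1 := by field_simp
    have : 1 - (2 / r) * |t - y| < 0 := by linarith
    simp only [hφdef]
    exact max_eq_left (by linarith)
  have hφbd : ∀ t : ℝ, |φ t| ≤ 1 := by
    intro t
    rw [abs_of_nonneg (le_max_left _ _)]
    have : 0 ≤ (2 / r) * |t - y| := by positivity
    exact max_le (by norm_num) (by linarith)
  have hφlip : ∀ s t : ℝ, |φ s - φ t| ≤ (2 / r) * |s - t| := by
    intro s t
    have h1 : |φ s - φ t| ≤ |(1 - (2 / r) * |s - y|) - (1 - (2 / r) * |t - y|)| := by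
      simp only [hφdef]
      rw [max_comm 0 (1 - (2 / r) * |s - (y:ℝ)|), max_comm 0 (1 - (2 / r) * |t - (y:ℝ)|)]
      exact abs_max_sub_max_le_abs _ _ _
    have h2 : (1 - (2 / r) * |s - (y:ℝ)|) - (1 - (2 / r) * |t - y|)
        = (2 / r) * (|t - (y:ℝ)| - |s - y|) := by ring
    have h3 : abs (|t - (y:ℝ)| - |s - y|) ≤ |s - t| := by
      have h4 := abs_abs_sub_abs_le_abs_sub (t - (y:ℝ)) (s - y)
      calc abs (|t - (y:ℝ)| - |s - y|) ≤ |(t - (y:ℝ)) - (s - y)| := h4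
        _ = |s - t| := by rw [show (t - (y:ℝ)) - (s - y) = -(s - t) by ring, abs_neg]
    calc |φ s - φ t| ≤ |(1 - (2 / r) * |s - y|) - (1 - (2 / r) * |t - y|)| := h1
      _ = (2 / r) * abs (|t - (y:ℝ)| - |s - y|) := by
          rw [h2, abs_mul, abs_of_pos (by positivity)]
      _ ≤ (2 / r) * |s - t| := mul_le_mul_of_nonneg_left h3 (by positivity)
  -- get f with T f y ≠ 0
  obtain ⟨f, hf, -, hTfy⟩ := hInT univ isOpen_univ (mem_univ _)
  have hg : AbsCont (T f) := hmaps f hf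
  obtain ⟨M, hM0, hgM⟩ := hg.bounded' hY
  set C : Y → 𝕜 := fun z => ((φ z : ℝ) : 𝕜) with hCdef
  have hClip : ∀ z w : Y, ‖C z - C w‖ ≤ (2 / r) * |(z : ℝ) - w| := by
    intro z w
    simp only [hCdef]
    rw [← RCLike.ofReal_sub, RCLike.norm_ofReal]
    exact hφlip _ _
  have hCbd : ∀ z : Y, ‖C z‖ ≤ 1 := by
    intro z
    simp only [hCdef, RCLike.norm_ofReal]
    exact hφbd _
  set g₁ : Y → F := fun z => C z • T f z with hg₁def
  have hg₁ : AbsCont g₁ :=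
    hg.smul' C (by positivity) hM0 hClip hCbd hgM
  -- g₁ vanishes near k z for every z near x
  set U : Set X := {z : X | |((k z : ℝ)) - (y' : ℝ)| < r / 2} with hUdef
  have hUopen : IsOpen U :=
    isOpen_lt (((continuous_subtype_val.comp hkcont).sub continuous_const).abs)
      continuous_const
  have hxU : x ∈ U := by
    simp [hUdef, hy'def, hrpos]
  have hSg₁0 : ∀ z ∈ U, S g₁ z = 0 := by
    intro z hz
    have hInS : InSupp S z (k z) := (hksupp z (k z)).mpr rfl
    refine vanish_of_zero_near hSsep hInS hg₁
      (U := {w : Y | r / 2 < |(w : ℝ) - y|})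
      (isOpen_lt continuous_const ((continuous_subtype_val.sub continuous_const).abs))
      ?_ ?_
    · -- k z is far from y
      have h1 : |(↑(k z) : ℝ) - y'| < r / 2 := hz
      have h2 : r ≤ |(y' : ℝ) - ↑(k z)| + |(↑(k z) : ℝ) - y| := by
        rw [hrdef]; exact abs_sub_le _ _ _
      have h3 : |(y' : ℝ) - ↑(k z)| = |(↑(k z) : ℝ) - y'| := abs_sub_comm _ _
      show r / 2 < |(↑(k z) : ℝ) - y|
      linarith [h2, h3 ▸ h2]
    · intro w hw
      have : φ w = 0 := hφ0 _ hw
      simp [hg₁def, hCdef, this]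
  -- contradiction
  have hvan : T (S g₁) y = 0 :=
    vanish_of_zero_near hsep hInT (hSmaps g₁ hg₁) hUopen hxU hSg₁0
  rw [hTS g₁ hg₁] at hvan
  apply hTfy
  have : g₁ y = T f y := by
    simp [hg₁def, hCdef, hφy]
  rw [← this, hvan]

/-- Theorem 4.4: the support maps `h` (of `T`) and `k` (of `T⁻¹`) of a biseparating
map are mutually inverse, hence `h` is a homeomorphism. -/
theorem biseparating_support_map_homeomorph {𝕜 : Type*} [RCLike 𝕜]
    {E F : Type*} [NormedAddCommGroup E] [NormedSpace 𝕜 E] [CompleteSpace E]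
    [NormedAddCommGroup F] [NormedSpace 𝕜 F] [CompleteSpace F]
    {X Y : Set ℝ} (hX : IsCompact X) (hY : IsCompact Y)
    (T : (X → E) → (Y → F)) (S : (Y → F) → (X → E))
    (hadd : ∀ f g : X → E, T (f + g) = T f + T g)
    (hsmul : ∀ (c : 𝕜) (f : X → E), T (c • f) = c • T f)
    (hSadd : ∀ f g : Y → F, S (f + g) = S f + S g)
    (hSsmul : ∀ (c : 𝕜) (f : Y → F), S (c • f) = c • S f)
    (hmaps : ∀ f : X → E, AbsCont f → AbsCont (T f))
    (hSmaps : ∀ g : Y → F, AbsCont g → AbsCont (S g))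
    (hST : ∀ f : X → E, AbsCont f → S (T f) = f)
    (hTS : ∀ g : Y → F, AbsCont g → T (S g) = g)
    (hsep : Separating T) (hSsep : Separating S)
    (h : Y → X) (hsupp : ∀ (y : Y) (x : X), InSupp T y x ↔ x = h y)
    (k : X → Y) (hksupp : ∀ (x : X) (y : Y), InSupp S x y ↔ y = k x)
    (hhcont : Continuous h) (hkcont : Continuous k) :
    Function.LeftInverse k h ∧ Function.RightInverse k h ∧
    ∃ H : Y ≃ₜ X, ⇑H = h := by
  have h1 : ∀ y, k (h y) = y :=
    support_maps_inverse (𝕜 := 𝕜) hY T S hmaps hSmaps hTS hsep hSsep h hsupp k hksupp hkcont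
  have h2 : ∀ x, h (k x) = x :=
    support_maps_inverse (𝕜 := 𝕜) hX S T hSmaps hmaps hST hSsep hsep k hksupp h hsupp hhcont
  exact ⟨h1, h2, ⟨⟨⟨h, k, h1, h2⟩, hhcont, hkcont⟩, rfl⟩⟩
end
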